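/- The vector m = (1, -1, -3) is a proper loop for q = 2/3, i.e., c(2/3, m) = 0 with all denominators nonzero, and its weight is w_{2/3}(m) = 1/3 ≠ 1. Consequently the weight w_{2/3} is not unique. -/

import Mathlib

noncomputable def cfRev (q : ℝ) : List ℤ → ℝ
  | [] => 0
  | [a] => (a : ℝ)
  | a :: b :: rest => (a : ℝ) + 1 / (q * cfRev q (b :: rest))

/-- `cf q [m₀, …, m_k]` is the continued fraction `m_k + 1/(q m_{k-1} + q/( … + q/(q m₀)))`. -/
noncomputable def cf (q : ℝ) (l : List ℤ) : ℝ := cfRev q l.reverse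

/-- `l` is a path for `q`: all denominators nonzero, i.e. every proper nonempty prefix
has nonzero continued-fraction value. -/
def IsPath (q : ℝ) (l : List ℤ) : Prop :=
  l ≠ [] ∧ ∀ t : List ℤ, t ≠ [] → t <+: l → t.length < l.length → cf q t ≠ 0

/-- all entries except possibly the last are nonzero -/
def IsProper (l : List ℤ) : Prop := ∀ i, i + 1 < l.length → l.getD i 0 ≠ 0

def IsLoop (q : ℝ) (l : List ℤ) : Prop := IsPath q l ∧ cf q l = 0

/-- the weight `q^{k/2} ∏_{j<k} |c(q, m_j)|`. -/
noncomputable def weight (q : ℝ) (l : List ℤ) : ℝ :=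
  Real.sqrt (q ^ (l.length - 1)) * ∏ j ∈ Finset.range (l.length - 1), |cf q (l.take (j + 1))|

/-- composition of paths -/
def comp (m n : List ℤ) : List ℤ := m.dropLast ++ (m.getLastD 0 + n.headD 0) :: n.tail

/-- one step of zero-skipping -/
def SkipStep (l l' : List ℤ) : Prop :=
  ∃ (u v : List ℤ) (x y : ℤ), l = u ++ x :: 0 :: y :: v ∧ l' = u ++ (x + y) :: v

/-- the weight `w_q` is unique -/
def WeightUnique (q : ℝ) : Prop :=
  ∀ m n : List ℤ, IsPath q m → IsProper m → IsPath q n → IsProper n →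
    cf q m = cf q n → weight q m = weight q n

lemma cf_singleton (q : ℝ) (a : ℤ) : cf q [a] = a := rfl

lemma cf_pair (q : ℝ) (a b : ℤ) : cf q [a, b] = b + 1 / (q * a) := rfl

lemma cf_triple (q : ℝ) (a b c : ℤ) : cf q [a, b, c] = c + 1 / (q * cf q [a, b]) := rfl

lemma isPath_singleton (q : ℝ) (a : ℤ) : IsPath q [a] :=
  ⟨List.cons_ne_nil a [], fun t ht hpre hlen => absurd (List.length_eq_zero_iff.mp
    (by simpa using hlen)) ht⟩

lemma isProper_singleton (a : ℤ) : IsProper [a] := fun i hi => by simp at hi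

lemma weight_singleton (q : ℝ) (a : ℤ) : weight q [a] = 1 := by simp [weight]

lemma isPath_triple {q : ℝ} {a b c : ℤ} (ha : a ≠ 0) (hab : cf q [a, b] ≠ 0) :
    IsPath q [a, b, c] := by
  refine ⟨List.cons_ne_nil _ _, fun t ht hpre hlen => ?_⟩
  rw [List.prefix_iff_eq_take.mp hpre]
  simp only [List.length_cons, List.length_nil] at hlen
  interval_cases h : t.length
  · exact absurd (List.length_eq_zero_iff.mp h) ht
  · simpa [cf_singleton] using ha
  · simpa using hab

lemma isProper_triple {a b : ℤ} (ha : a ≠ 0) (hb : b ≠ 0) (c : ℤ) : IsProper [a, b, c] := by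
  intro i hi
  have hi' : i < 2 := by simp at hi; omega
  interval_cases i <;> simpa

lemma weight_triple {q : ℝ} (hq : 0 ≤ q) (a b c : ℤ) :
    weight q [a, b, c] = q * |cf q [a, b]| * |(a : ℝ)| := by
  simp [weight, Finset.prod_range_succ, Real.sqrt_sq hq, cf_singleton]
  ring

/-- The one-entry path `[0]` is a proper loop of weight `1`, so any other proper loop witnesses
non-uniqueness as soon as its weight differs from `1`. -/
lemma not_weightUnique_of_isLoop {q : ℝ} {m : List ℤ} (hm : IsLoop q m) (hproper : IsProper m)
    (hw : weight q m ≠ 1) : ¬ WeightUnique q := fun h =>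
  hw <| (h m [0] hm.1 hproper (isPath_singleton q 0) (isProper_singleton 0)
    (by rw [hm.2, cf_singleton]; simp)).trans (weight_singleton q 0)

theorem stmt9 :
    IsPath (2 / 3) [1, -1, -3] ∧ IsProper [1, -1, -3] ∧ cf (2 / 3) [1, -1, -3] = 0 ∧
    weight (2 / 3) [1, -1, -3] = 1 / 3 ∧ ¬ WeightUnique (2 / 3) := by
  have hpair : cf (2 / 3) [1, -1] = 1 / 2 := by norm_num [cf_pair]
  have hpath : IsPath (2 / 3) [1, -1, -3] := isPath_triple one_ne_zero (by norm_num [hpair])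
  have hproper : IsProper [1, -1, -3] := isProper_triple one_ne_zero (by norm_num) (-3)
  have hcf : cf (2 / 3) [1, -1, -3] = 0 := by norm_num [cf_triple, hpair]
  have hw : weight (2 / 3) [1, -1, -3] = 1 / 3 := by norm_num [weight_triple, hpair]
  exact ⟨hpath, hproper, hcf, hw,
    not_weightUnique_of_isLoop ⟨hpath, hcf⟩ hproper (by norm_num [hw])⟩
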